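/- arXiv:2604.23211 — 2 statements merged into one kernel-verified Lean document; each statement's English description precedes it below -/
import Mathlib

section
/- For all g, h ∈ D∞ there exist natural numbers r, s such that φ(g)₀ + φ(h)₀ = φ(gh)₀ + 2r and φ(g)₁ + φ(h)₁ = φ(gh)₁ + 2s. In particular, φ(gh) ≤ φ(g) + φ(h) componentwise and φ(g) + φ(h) ≡ φ(gh) mod 2 componentwise. -/
open DihedralGroup CoxeterSystem

/-- The infinite dihedral group `D∞`, realized as `DihedralGroup 0`. -/
abbrev Dinf := DihedralGroup 0

/-- View an element of `ZMod 0` as an integer. -/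
def toInt (k : ZMod 0) : ℤ := k

/-- The Coxeter matrix of type `A₁⁽¹⁾`: diagonal entries `1`, off-diagonal
entries `0` (encoding infinite order). -/
def Mmat : CoxeterMatrix (Fin 2) where
  M := !![1, 0; 0, 1]
  isSymm := by decide
  diagonal := by decide
  off_diagonal := by intro i i' h; fin_cases i <;> fin_cases i' <;> simp_all

/-- The generator index `0` (resp. `1`) corresponds to the geometric
reflection `s₀ = sr 0` (resp. `s₁ = sr 1`). -/
def toGen : Fin 2 → Dinf := fun i => if i = 0 then sr 0 else sr 1

/-- The product in `D∞` of a word in the two generators `s₀, s₁`. -/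
def wprod (w : List (Fin 2)) : Dinf := (w.map toGen).prod

/-- The explicit reduced word (an alternating word in `s₀` and `s₁`) for an
element of `D∞`. -/
def reducedWord : Dinf → List (Fin 2)
  | .r k => if 0 ≤ toInt k then alternatingWord 0 1 (2 * (toInt k).natAbs)
      else alternatingWord 1 0 (2 * (toInt k).natAbs)
  | .sr k => if 0 < toInt k then alternatingWord 0 1 (2 * (toInt k).natAbs - 1)
      else alternatingWord 1 0 (2 * (toInt k).natAbs + 1)

/-- The degree map `φ : D∞ → ℕ²`, counting occurrences of `s₀` and of `s₁` in
a reduced word. -/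
def φ (g : Dinf) : ℕ × ℕ := ((reducedWord g).count 0, (reducedWord g).count 1)

/-- The explicit (computable) length function on `D∞`. -/
def cLength : Dinf → ℕ
  | .r k => 2 * (toInt k).natAbs
  | .sr k => if 0 < toInt k then 2 * (toInt k).natAbs - 1 else 2 * (toInt k).natAbs + 1

/-- `t` is a reflection of `D∞`, i.e. an element of the form `sr k`. -/
def IsReflectionD (t : Dinf) : Prop := ∃ k, t = sr k

/-- The moment graph of `D∞` has an edge `u → v` of degree `α` iff
`v = u * s_α` where `s_α` is the (root) reflection of degree `α`. -/
def IsEdge (u v : Dinf) (α : ℕ × ℕ) : Prop := ∃ t : Dinf, IsReflectionD t ∧ φ t = α ∧ v = u * t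

/-- Increasing chains in the moment graph of `D∞`: the Coxeter length strictly
increases along each edge, and the degree of the chain is the sum of the
degrees of its edges. -/
inductive Chain (cs : CoxeterSystem Mmat Dinf) : Dinf → Dinf → ℕ × ℕ → Prop where
  | refl (u : Dinf) : Chain cs u u 0
  | step {u v w : Dinf} {d α : ℕ × ℕ} : Chain cs u v d → IsEdge v w α →
      cs.length v < cs.length w → Chain cs u w (d + α)

/-- Bruhat order on `D∞`: `u ≤ v` iff there is an increasing chain from `u`
to `v` in the moment graph. -/
def BruhatLE (cs : CoxeterSystem Mmat Dinf) (u v : Dinf) : Prop := ∃ d, Chain cs u v d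

/-- Strict Bruhat order on `D∞`. -/
def BruhatLT (cs : CoxeterSystem Mmat Dinf) (u v : Dinf) : Prop :=
  BruhatLE cs u v ∧ u ≠ v

/-- `v` is reachable from `u` by an increasing chain of degree at most `d`. -/
def Reachable (cs : CoxeterSystem Mmat Dinf) (u : Dinf) (d : ℕ × ℕ) (v : Dinf) : Prop :=
  ∃ d', d' ≤ d ∧ Chain cs u v d'

/-- The algebraic set `A_d(u) = { v | ℓ(uv) = ℓ(u) + ℓ(v), φ(v) ≤ d }`. -/
def Ad (cs : CoxeterSystem Mmat Dinf) (u : Dinf) (d : ℕ × ℕ) : Set Dinf :=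
  { v | cs.length (u * v) = cs.length u + cs.length v ∧ φ v ≤ d }

/-- `w` is maximal in `S` with respect to the Bruhat order. -/
def IsMaximalIn (cs : CoxeterSystem Mmat Dinf) (w : Dinf) (S : Set Dinf) : Prop :=
  w ∈ S ∧ ∀ v ∈ S, ¬ BruhatLT cs w v

/-- The combinatorial curve neighborhood `Γ_d(u)`: the Bruhat-maximal elements
among those reachable from `u` by an increasing chain of degree `≤ d`. -/
def CurveNeighborhood (cs : CoxeterSystem Mmat Dinf) (u : Dinf) (d : ℕ × ℕ) : Set Dinf :=
  { v | Reachable cs u d v ∧ ∀ v', Reachable cs u d v' → ¬ BruhatLT cs v v' }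

lemma count_alt (i j : Fin 2) (hij : i ≠ j) (m : ℕ) :
    (alternatingWord i j m).count i = m / 2 ∧ (alternatingWord i j m).count j = (m + 1) / 2 := by
  induction m with
  | zero => simp [alternatingWord]
  | succ m ih =>
    rw [alternatingWord_succ']
    rcases Nat.even_or_odd m with he | ho
    · rw [if_pos he, List.count_cons, List.count_cons]
      simp only [beq_iff_eq, hij, hij.symm, if_false, if_true]
      obtain ⟨a, rfl⟩ := he
      omega
    · rw [if_neg (Nat.not_even_iff_odd.mpr ho), List.count_cons, List.count_cons]
      simp only [beq_iff_eq, hij, hij.symm, if_false, if_true]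
      obtain ⟨a, rfl⟩ := ho
      omega

lemma phi_r (k : ZMod 0) : φ (DihedralGroup.r k) = ((toInt k).natAbs, (toInt k).natAbs) := by
  have h01 : (0 : Fin 2) ≠ 1 := by decide
  simp only [φ, reducedWord]
  split
  · rw [(count_alt 0 1 h01 _).1, (count_alt 0 1 h01 _).2]; simp; omega
  · rw [(count_alt 1 0 h01.symm _).2, (count_alt 1 0 h01.symm _).1]; simp; omega

lemma phi_sr (k : ZMod 0) : φ (DihedralGroup.sr k) =
    if 0 < toInt k then ((toInt k).natAbs - 1, (toInt k).natAbs)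
    else ((toInt k).natAbs + 1, (toInt k).natAbs) := by
  have h01 : (0 : Fin 2) ≠ 1 := by decide
  simp only [φ, reducedWord]
  split
  · rename_i hk
    rw [(count_alt 0 1 h01 _).1, (count_alt 0 1 h01 _).2]
    simp; omega
  · rename_i hk
    rw [(count_alt 1 0 h01.symm _).2, (count_alt 1 0 h01.symm _).1]
    simp; omega

/-- Parity of the degree map: `φ(g) + φ(h) = φ(gh) + (2r, 2s)` for some
`r, s ∈ ℕ`; in particular `φ(gh) ≤ φ(g) + φ(h)` componentwise and
`φ(g) + φ(h) ≡ φ(gh) mod 2` componentwise. -/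
theorem stmt6 (g h : Dinf) :
    (∃ r s : ℕ, (φ g).1 + (φ h).1 = (φ (g * h)).1 + 2 * r ∧
                (φ g).2 + (φ h).2 = (φ (g * h)).2 + 2 * s) ∧
    φ (g * h) ≤ φ g + φ h ∧
    ((φ g).1 + (φ h).1) % 2 = (φ (g * h)).1 % 2 ∧
    ((φ g).2 + (φ h).2) % 2 = (φ (g * h)).2 % 2 := by
  have hsub : ∀ x y : ZMod 0, toInt (x - y) = toInt x - toInt y := fun _ _ => rfl
  have hadd : ∀ x y : ZMod 0, toInt (x + y) = toInt x + toInt y := fun _ _ => rfl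
  have main : (φ (g * h)).1 ≤ (φ g).1 + (φ h).1 ∧ (φ (g * h)).2 ≤ (φ g).2 + (φ h).2 ∧
      ((φ g).1 + (φ h).1) % 2 = (φ (g * h)).1 % 2 ∧
      ((φ g).2 + (φ h).2) % 2 = (φ (g * h)).2 % 2 := by
    rcases g with a | a <;> rcases h with b | b <;>
      simp only [r_mul_r, r_mul_sr, sr_mul_r, sr_mul_sr, phi_r, phi_sr, hsub, hadd] <;>
      (try split_ifs) <;> simp <;> omega
  obtain ⟨h1, h2, h3, h4⟩ := main
  refine ⟨⟨((φ g).1 + (φ h).1 - (φ (g * h)).1) / 2,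
      ((φ g).2 + (φ h).2 - (φ (g * h)).2) / 2, by omega, by omega⟩, ?_, h3, h4⟩
  rw [Prod.le_def, Prod.fst_add, Prod.snd_add]
  exact ⟨h1, h2⟩
end

section
/- If there is an increasing chain in the moment graph of D∞ from u to v of total degree d', then there exist natural numbers r, s such that d' = φ(u⁻¹v) + (2r, 2s). In particular φ(u⁻¹v) ≤ d' componentwise. -/
open DihedralGroup CoxeterSystem

lemma altCount : ∀ n : ℕ,
    ((alternatingWord (0:Fin 2) 1 n).count 0 = n/2 ∧ (alternatingWord (0:Fin 2) 1 n).count 1 = (n+1)/2) ∧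
    ((alternatingWord (1:Fin 2) 0 n).count 0 = (n+1)/2 ∧ (alternatingWord (1:Fin 2) 0 n).count 1 = n/2) := by
  intro n
  induction n with
  | zero => simp [CoxeterSystem.alternatingWord]
  | succ m ih =>
    simp only [CoxeterSystem.alternatingWord_succ, List.count_append] at *
    simp [List.count_singleton]
    omega

lemma φ_r (k : ZMod 0) : φ (r k) = ((toInt k).natAbs, (toInt k).natAbs) := by
  simp only [φ, reducedWord]
  split_ifs <;>
    simp only [(altCount _).1.1, (altCount _).1.2, (altCount _).2.1, (altCount _).2.2,
      Prod.mk.injEq] <;> omega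

lemma φ_sr (k : ZMod 0) : φ (sr k) =
    ((if 0 < toInt k then (toInt k).natAbs - 1 else (toInt k).natAbs + 1), (toInt k).natAbs) := by
  simp only [φ, reducedWord]
  split_ifs with h <;>
    simp only [(altCount _).1.1, (altCount _).1.2, (altCount _).2.1, (altCount _).2.2,
      Prod.mk.injEq] <;> omega

lemma key (g : Dinf) (b : ZMod 0) :
    ∃ r s : ℕ, φ g + φ (sr b) = φ (g * sr b) + (2 * r, 2 * s) := by
  have hsub : ∀ i j : ZMod 0, toInt (j - i) = toInt j - toInt i := fun _ _ => rfl
  cases g with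
  | r a =>
    rw [r_mul_sr, φ_r, φ_sr, φ_sr, hsub]
    set x := toInt a; set y := toInt b
    refine ⟨?_, ?_, ?_⟩
    · exact (x.natAbs + (if 0 < y then y.natAbs - 1 else y.natAbs + 1)
        - (if 0 < y - x then (y-x).natAbs - 1 else (y-x).natAbs + 1)) / 2
    · exact (x.natAbs + y.natAbs - (y - x).natAbs) / 2
    · simp only [Prod.mk_add_mk, Prod.mk.injEq]
      constructor <;> first | omega | (split_ifs <;> omega)
  | sr a =>
    rw [sr_mul_sr, φ_sr, φ_sr, φ_r, hsub]
    set x := toInt a; set y := toInt b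
    refine ⟨((if 0 < x then x.natAbs - 1 else x.natAbs + 1) +
      (if 0 < y then y.natAbs - 1 else y.natAbs + 1) - (y - x).natAbs) / 2,
      (x.natAbs + y.natAbs - (y - x).natAbs) / 2, ?_⟩
    simp only [Prod.mk_add_mk, Prod.mk.injEq]
    constructor <;> first | omega | (split_ifs <;> omega)

/-- Parity of chains (Lemma 2.5): if there is an increasing chain from `u` to
`v` of total degree `d'`, then `d' = φ(u⁻¹v) + (2r, 2s)` for some `r, s ∈ ℕ`;
in particular `φ(u⁻¹v) ≤ d'` componentwise. -/
theorem stmt8 (cs : CoxeterSystem Mmat Dinf)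
    (h0 : cs.simple 0 = sr 0) (h1 : cs.simple 1 = sr 1)
    (u v : Dinf) (d' : ℕ × ℕ) (hc : Chain cs u v d') :
    (∃ r s : ℕ, d' = φ (u⁻¹ * v) + (2 * r, 2 * s)) ∧ φ (u⁻¹ * v) ≤ d' := by
  have main : ∃ r s : ℕ, d' = φ (u⁻¹ * v) + (2 * r, 2 * s) := by
    induction hc with
    | refl =>
      refine ⟨0, 0, ?_⟩
      rw [inv_mul_cancel, one_def, φ_r]
      simp only [Prod.mk_add_mk, Prod.mk.injEq]
      constructor <;> simp [toInt]
    | @step v1 w1 d α hch he hl ih =>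
      obtain ⟨r1, s1, h1⟩ := ih
      obtain ⟨t, ⟨k, rfl⟩, hφ, rfl⟩ := he
      obtain ⟨r2, s2, h2⟩ := key (u⁻¹ * v1) k
      refine ⟨r1 + r2, s1 + s2, ?_⟩
      rw [← mul_assoc, h1, ← hφ]
      simp only [Prod.ext_iff, Prod.fst_add, Prod.snd_add] at h2 ⊢
      constructor <;> omega
  refine ⟨main, ?_⟩
  obtain ⟨r, s, h⟩ := main
  rw [h]
  exact ⟨Nat.le_add_right _ _, Nat.le_add_right _ _⟩
end
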